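/- arXiv:2107.06792 — 3 statements merged into one kernel-verified Lean document; each statement's English description precedes it below -/
import Mathlib

section
/- For all x ≥ 0 and b, y > 0, the lower incomplete gamma function γ(x,y) = ∫₀^y t^{x-1} e^{-t} dt satisfies min{1, b^x}·γ(x,y) ≤ γ(x, b·y) ≤ max{1, b^x}·γ(x,y). -/
open Real MeasureTheory

/-- Lower incomplete gamma function γ(p,z) = ∫₀^z t^{p-1} e^{-t} dt. -/
noncomputable def lowerGamma (p z : ℝ) : ℝ := ∫ t in (0:ℝ)..z, t ^ (p - 1) * Real.exp (-t)

open intervalIntegral Filter Set in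
lemma lg_intable {x : ℝ} (hx : 0 < x) (c y : ℝ) :
    IntervalIntegrable (fun s : ℝ => s ^ (x-1) * Real.exp (-(c*s))) volume 0 y :=
  (intervalIntegrable_rpow' (by linarith)).mul_continuousOn (by fun_prop)

lemma lg_intable' {x : ℝ} (hx : 0 < x) (y : ℝ) :
    IntervalIntegrable (fun s : ℝ => s ^ (x-1) * Real.exp (-s)) volume 0 y := by
  simpa using lg_intable hx 1 y

lemma lg_nonneg (x : ℝ) {y : ℝ} (hy : 0 ≤ y) : 0 ≤ lowerGamma x y := by
  apply intervalIntegral.integral_nonneg hy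
  intro t ht
  exact mul_nonneg (Real.rpow_nonneg ht.1 _) (Real.exp_pos _).le

lemma lg_mono {x : ℝ} (hx : 0 < x) {y z : ℝ} (hy : 0 ≤ y) (hyz : y ≤ z) :
    lowerGamma x y ≤ lowerGamma x z := by
  apply intervalIntegral.integral_mono_interval le_rfl hy hyz
  · filter_upwards [ae_restrict_mem measurableSet_Ioc] with t ht
    exact mul_nonneg (Real.rpow_nonneg ht.1.le _) (Real.exp_pos _).le
  · exact lg_intable' hx z

lemma lg_subst {x : ℝ} (hx : 0 < x) {b : ℝ} (hb : 0 < b) {y : ℝ} (hy : 0 ≤ y) :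
    lowerGamma x (b * y) = b ^ x * ∫ s in (0:ℝ)..y, s ^ (x-1) * Real.exp (-(b*s)) := by
  have h := intervalIntegral.smul_integral_comp_mul_left
    (fun t : ℝ => t ^ (x-1) * Real.exp (-t)) (c := b) (a := 0) (b := y)
  rw [mul_zero] at h
  rw [lowerGamma, ← h, smul_eq_mul, ← intervalIntegral.integral_const_mul,
    ← intervalIntegral.integral_const_mul]
  apply intervalIntegral.integral_congr
  intro s hs
  rw [Set.uIcc_of_le hy] at hs
  dsimp only
  have : (b * s) ^ (x - 1) = b ^ (x-1) * s ^ (x-1) := Real.mul_rpow hb.le hs.1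
  rw [this]
  rw [show b ^ x = b * b ^ (x-1) by
    rw [← Real.rpow_one_add' hb.le (by intro h; linarith), add_sub_cancel]]
  ring

lemma lg_zero {z : ℝ} (hz : 0 < z) : lowerGamma 0 z = 0 := by
  apply intervalIntegral.integral_undef
  have : ¬ IntervalIntegrable (fun t : ℝ => t ^ ((0:ℝ) - 1) * Real.exp (-t)) volume 0 z := by
    apply not_intervalIntegrable_of_sub_inv_isBigO_punctured (c := 0) _ hz.ne
      (Set.left_mem_uIcc)
    simp only [sub_zero]
    rw [Asymptotics.isBigO_iff]
    refine ⟨Real.exp 1, ?_⟩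
    have h1 : Set.Ioo (-1:ℝ) 1 \ {0} ∈ nhdsWithin (0:ℝ) {(0:ℝ)}ᶜ :=
      diff_mem_nhdsWithin_compl (Ioo_mem_nhds (by norm_num) (by norm_num)) _
    filter_upwards [h1] with t ht
    have ht0 : t ≠ 0 := ht.2
    have : t ^ ((0:ℝ) - 1) = t⁻¹ := by
      rw [zero_sub, Real.rpow_neg_one]
    rw [this, norm_mul]
    rw [mul_comm (Real.exp 1), mul_assoc]
    apply le_mul_of_one_le_right (norm_nonneg _)
    rw [Real.norm_eq_abs, Real.abs_exp]
    calc (1:ℝ) = Real.exp (-1) * Real.exp 1 := by rw [← Real.exp_add]; norm_num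
    _ ≤ Real.exp (-t) * Real.exp 1 :=
        mul_le_mul_of_nonneg_right (Real.exp_le_exp.2 (by linarith [ht.1.2]))
          (Real.exp_pos 1).le
  intro hc
  exact this hc

/-- For x ≥ 0 and b, y > 0:
    min{1, b^x}·γ(x,y) ≤ γ(x, b·y) ≤ max{1, b^x}·γ(x,y). -/
theorem lowerGamma_scaling (x b y : ℝ) (hx : 0 ≤ x) (hb : 0 < b) (hy : 0 < y) :
    min 1 (b ^ x) * lowerGamma x y ≤ lowerGamma x (b * y) ∧
      lowerGamma x (b * y) ≤ max 1 (b ^ x) * lowerGamma x y := by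
  rcases eq_or_lt_of_le hx with h0 | hx
  · rw [← h0, lg_zero hy, lg_zero (by positivity)]
    simp
  · have hsub := lg_subst hx hb hy.le
    rcases le_total 1 b with h1b | hb1
    · have hbx : 1 ≤ b ^ x := by
        have := Real.rpow_le_rpow_of_exponent_le h1b hx.le (y := 0)
        rwa [Real.rpow_zero] at this
      rw [min_eq_left hbx, max_eq_right hbx, one_mul]
      constructor
      · exact lg_mono hx hy.le (le_mul_of_one_le_left hy.le h1b)
      · rw [hsub]
        gcongr
        apply intervalIntegral.integral_mono_on hy.le (lg_intable hx b y)
          (lg_intable' hx y)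
        intro s hs
        apply mul_le_mul_of_nonneg_left _ (Real.rpow_nonneg hs.1 _)
        apply Real.exp_le_exp.2
        have : s ≤ b * s := le_mul_of_one_le_left hs.1 h1b
        linarith
    · have hbx : b ^ x ≤ 1 := by
        have := Real.rpow_le_rpow_of_exponent_ge hb hb1 hx.le (z := 0)
        rwa [Real.rpow_zero] at this
      rw [min_eq_right hbx, max_eq_left hbx, one_mul]
      constructor
      · rw [hsub]
        gcongr
        apply intervalIntegral.integral_mono_on hy.le (lg_intable' hx y)
          (lg_intable hx b y)
        intro s hs
        apply mul_le_mul_of_nonneg_left _ (Real.rpow_nonneg hs.1 _)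
        apply Real.exp_le_exp.2
        have : b * s ≤ s := mul_le_of_le_one_left hs.1 hb1
        linarith
      · exact lg_mono hx (by positivity) (mul_le_of_le_one_left hy.le hb1)
end

section
/- Let θ be a non-null locally finite Borel measure on [0,∞), let κ_d be the volume of the unit ball in ℝ^d, and define Λ(t) = κ_d ∫₀^t (t-s)^d θ(ds). Suppose that for all x > 0, ∫₀^∞ e^{-x Λ(t)} θ(dt) < ∞. Then for all x ≥ 0 and y > 0, the integral Q(x,y) := ∫₀^∞ t^x e^{-y Λ(t)} θ(dt) is finite. -/
open Real MeasureTheory Set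

/-- Volume of the unit Euclidean ball in ℝ^d. -/
noncomputable def ballVol (d : ℕ) : ℝ :=
  (volume (Metric.closedBall (0 : EuclideanSpace ℝ (Fin d)) 1)).toReal

/-- If θ is a non-null locally finite measure on [0,∞) with
    ∫₀^∞ e^{-xΛ(t)} θ(dt) < ∞ for all x > 0, where Λ(t) = κ_d ∫₀^t (t-s)^d θ(ds),
    then Q(x,y) = ∫₀^∞ t^x e^{-yΛ(t)} θ(dt) < ∞ for all x ≥ 0, y > 0. -/
theorem integrable_rpow_mul_exp_neg_Lambda (d : ℕ) (hd : 1 ≤ d)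
    (θ : Measure ℝ) [IsLocallyFiniteMeasure θ] (hθ0 : θ ≠ 0) (hsupp : θ (Iio 0) = 0)
    (Λ : ℝ → ℝ) (hΛ : ∀ t, Λ t = ballVol d * ∫ s in Icc 0 t, (t - s) ^ d ∂θ)
    (hB : ∀ x > (0:ℝ), Integrable (fun t => Real.exp (-(x * Λ t))) θ) :
    ∀ x ≥ (0:ℝ), ∀ y > (0:ℝ),
      Integrable (fun t => t ^ x * Real.exp (-(y * Λ t))) θ := by
  intro x hx y hy
  set κ := ballVol d with hκdef
  have hκpos : 0 < κ := by
    have h1 : 0 < volume (Metric.closedBall (0 : EuclideanSpace ℝ (Fin d)) 1) :=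
      Metric.measure_closedBall_pos _ _ one_pos
    have h2 : volume (Metric.closedBall (0 : EuclideanSpace ℝ (Fin d)) 1) < ⊤ :=
      (isCompact_closedBall _ _).measure_lt_top
    exact ENNReal.toReal_pos h1.ne' h2.ne
  -- Λ is nonnegative on [0,∞)
  have hΛ0 : ∀ t, 0 ≤ t → 0 ≤ Λ t := by
    intro t ht
    rw [hΛ t]
    apply mul_nonneg hκpos.le
    apply setIntegral_nonneg measurableSet_Icc
    intro s hs
    exact pow_nonneg (by linarith [hs.2]) d
  -- find t₀ with θ (Icc 0 t₀) ≠ 0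
  obtain ⟨n, hn⟩ : ∃ n : ℕ, θ (Icc 0 (n:ℝ)) ≠ 0 := by
    by_contra h
    push_neg at h
    apply hθ0
    have hIci : θ (Ici (0:ℝ)) = 0 := by
      refine measure_mono_null ?_ (measure_iUnion_null h)
      intro t ht
      obtain ⟨n, hn⟩ := exists_nat_ge t
      exact mem_iUnion.2 ⟨n, ht, hn⟩
    have huniv : θ univ = 0 := by
      rw [← Iio_union_Ici (a := (0:ℝ))]
      exact measure_union_null hsupp hIci
    exact Measure.measure_univ_eq_zero.mp huniv
  set t₀ : ℝ := (n : ℝ) with ht₀def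
  have ht₀0 : (0:ℝ) ≤ t₀ := Nat.cast_nonneg n
  have hfin : θ (Icc 0 t₀) < ⊤ := isCompact_Icc.measure_lt_top
  set m : ℝ := (θ (Icc 0 t₀)).toReal with hmdef
  have hm : 0 < m := ENNReal.toReal_pos hn hfin.ne
  set a : ℝ := κ * m with hadef
  have ha : 0 < a := mul_pos hκpos hm
  -- lower bound on Λ for t ≥ t₀
  have hlow : ∀ t, t₀ ≤ t → a * (t - t₀) ^ d ≤ Λ t := by
    intro t ht
    have hti : IntegrableOn (fun s => (t - s) ^ d) (Icc 0 t) θ := by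
      apply ContinuousOn.integrableOn_compact isCompact_Icc
      exact ((continuous_const.sub continuous_id).pow d).continuousOn
    have hsub : Icc (0:ℝ) t₀ ⊆ Icc 0 t := Icc_subset_Icc le_rfl ht
    have h1 : ∫ _ in Icc 0 t₀, ((t - t₀) ^ d) ∂θ ≤ ∫ s in Icc 0 t₀, (t - s) ^ d ∂θ := by
      apply setIntegral_mono_on (integrableOn_const hfin.ne) (hti.mono_set hsub)
        measurableSet_Icc
      intro s hs
      exact pow_le_pow_left₀ (by linarith) (by linarith [hs.2]) d
    have h2 : ∫ s in Icc 0 t₀, (t - s) ^ d ∂θ ≤ ∫ s in Icc 0 t, (t - s) ^ d ∂θ := by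
      apply setIntegral_mono_set hti
      · exact (ae_restrict_iff' measurableSet_Icc).2
          (Filter.Eventually.of_forall fun s hs => pow_nonneg (by linarith [hs.2]) d)
      · exact HasSubset.Subset.eventuallyLE hsub
    have h0 : ∫ _ in Icc 0 t₀, ((t - t₀) ^ d) ∂θ = m * (t - t₀) ^ d := by
      rw [setIntegral_const, smul_eq_mul]; rfl
    rw [hΛ t]
    calc a * (t - t₀) ^ d = κ * (m * (t - t₀) ^ d) := by rw [hadef]; ring
      _ ≤ κ * ∫ s in Icc 0 t, (t - s) ^ d ∂θ := by
          apply mul_le_mul_of_nonneg_left _ hκpos.le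
          rw [← h0]; exact h1.trans h2
  -- Λ is a.e. measurable
  have hΛm : AEMeasurable Λ θ := by
    have h1 : AEMeasurable (fun t => Real.exp (-(1 * Λ t))) θ := (hB 1 one_pos).aemeasurable
    have h2 : AEMeasurable (fun t => -Real.log (Real.exp (-(1 * Λ t)))) θ :=
      (Real.measurable_log.comp_aemeasurable h1).neg
    have heq : (fun t => -Real.log (Real.exp (-(1 * Λ t)))) = Λ := by
      funext t; rw [Real.log_exp]; ring
    rwa [heq] at h2
  -- eventually t^x exp(-(y*a/4)t) ≤ 1
  have htend := tendsto_rpow_mul_exp_neg_mul_atTop_nhds_zero x (y * a / 4) (by positivity)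
  obtain ⟨T, hT⟩ := (htend.eventually_le_const (zero_lt_one)).exists_forall_of_atTop
  set T' : ℝ := max T (2 * t₀ + 2) with hT'def
  set M : ℝ := max 1 (T' ^ x) with hMdef
  have hM1 : (1:ℝ) ≤ M := le_max_left _ _
  -- key pointwise bound
  have hkey : ∀ t, 0 ≤ t → t ^ x ≤ M * Real.exp (y / 2 * Λ t) := by
    intro t ht
    have hexpge : (1:ℝ) ≤ Real.exp (y / 2 * Λ t) :=
      Real.one_le_exp (mul_nonneg (by linarith) (hΛ0 t ht))
    rcases le_or_gt t T' with h | h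
    · calc t ^ x ≤ T' ^ x := Real.rpow_le_rpow ht h hx
        _ ≤ M := le_max_right _ _
        _ = M * 1 := (mul_one M).symm
        _ ≤ M * Real.exp (y / 2 * Λ t) :=
            mul_le_mul_of_nonneg_left hexpge (by linarith)
    · have hTt : T ≤ t := le_of_lt (lt_of_le_of_lt (le_max_left _ _) h)
      have h2t : 2 * t₀ + 2 ≤ t := le_of_lt (lt_of_le_of_lt (le_max_right _ _) h)
      have h1 : t ^ x * Real.exp (-(y * a / 4) * t) ≤ 1 := hT t hTt
      have h3 : t - t₀ ≤ (t - t₀) ^ d := le_self_pow₀ (by linarith) (by omega)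
      have h4 : a * (t / 2) ≤ Λ t := by
        have h5 := hlow t (by linarith)
        have h6 : t / 2 ≤ t - t₀ := by linarith
        nlinarith
      have h6 : t ^ x ≤ Real.exp (y * a / 4 * t) := by
        have hp := (Real.exp_pos (y * a / 4 * t)).le
        have h7 : t ^ x * Real.exp (-(y * a / 4) * t) * Real.exp (y * a / 4 * t)
            ≤ 1 * Real.exp (y * a / 4 * t) := mul_le_mul_of_nonneg_right h1 hp
        rwa [mul_assoc, ← Real.exp_add,
          show -(y * a / 4) * t + y * a / 4 * t = 0 by ring, Real.exp_zero, mul_one,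
          one_mul] at h7
      have h8 : y * a / 4 * t ≤ y / 2 * Λ t := by
        have := mul_le_mul_of_nonneg_left h4 (by linarith : (0:ℝ) ≤ y / 2)
        nlinarith
      calc t ^ x ≤ Real.exp (y * a / 4 * t) := h6
        _ ≤ Real.exp (y / 2 * Λ t) := Real.exp_le_exp.2 h8
        _ = 1 * Real.exp (y / 2 * Λ t) := (one_mul _).symm
        _ ≤ M * Real.exp (y / 2 * Λ t) :=
            mul_le_mul_of_nonneg_right hM1 (Real.exp_pos _).le
  -- integrable majorant
  have hg : Integrable (fun t => M * Real.exp (-(y / 2 * Λ t))) θ :=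
    (hB (y / 2) (by linarith)).const_mul M
  have hfm : AEStronglyMeasurable (fun t => t ^ x * Real.exp (-(y * Λ t))) θ := by
    apply AEMeasurable.aestronglyMeasurable
    exact ((Real.continuous_rpow_const hx).measurable.aemeasurable).mul
      (Real.measurable_exp.comp_aemeasurable ((hΛm.const_mul y).neg))
  have hae : ∀ᵐ t ∂θ, (0:ℝ) ≤ t := by
    rw [ae_iff]
    refine measure_mono_null ?_ hsupp
    intro t ht
    simpa using ht
  apply Integrable.mono' hg hfm
  filter_upwards [hae] with t ht
  have h1 : 0 ≤ t ^ x := Real.rpow_nonneg ht x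
  rw [norm_mul, Real.norm_eq_abs, Real.norm_eq_abs, abs_of_nonneg h1,
    abs_of_nonneg (Real.exp_pos _).le]
  calc t ^ x * Real.exp (-(y * Λ t))
      ≤ (M * Real.exp (y / 2 * Λ t)) * Real.exp (-(y * Λ t)) :=
        mul_le_mul_of_nonneg_right (hkey t ht) (Real.exp_pos _).le
    _ = M * Real.exp (-(y / 2 * Λ t)) := by
        rw [mul_assoc, ← Real.exp_add,
          show y / 2 * Λ t + -(y * Λ t) = -(y / 2 * Λ t) by ring]
end

section
/- For any integer d ≥ 1, real τ with -1 < τ ≤ d-1 and b > 0, ∫₀^b t^τ e^{-t^{d+τ+1}} dt - (2/B(d+1,τ+1)) ∫₀^b ∫₀^t (t-s)^d e^{-(s^{d+τ+1} + t^{d+τ+1})} t^τ s^τ ds dt > γ((τ+1)/(d+τ+1), b^{d+τ+1}) · (1/(d+τ+1)) · (1 - 2(τ+1)/(d+τ+1)) ≥ 0. -/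
open Real MeasureTheory

/-- Beta function B(a,b) = ∫₀¹ u^{a-1} (1-u)^{b-1} du. -/
noncomputable def betaFn (a b : ℝ) : ℝ := ∫ u in (0:ℝ)..1, u ^ (a - 1) * (1 - u) ^ (b - 1)

lemma lowerGamma_eq (p X : ℝ) (hX : 0 ≤ X) :
    (lowerGamma p X : ℂ) = Complex.partialGamma p X := by
  rw [lowerGamma, Complex.partialGamma, ← intervalIntegral.integral_ofReal]
  apply intervalIntegral.integral_congr
  intro x hx
  rw [Set.uIcc_of_le hX] at hx
  push_cast
  rw [Complex.ofReal_cpow hx.1]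
  push_cast
  ring

lemma lowerGamma_add_one {p : ℝ} (hp : 0 < p) {z : ℝ} (hz : 0 ≤ z) :
    lowerGamma (p + 1) z = p * lowerGamma p z - Real.exp (-z) * z ^ p := by
  have h := Complex.partialGamma_add_one (s := (p:ℂ)) (by simpa using hp) hz
  rw [← lowerGamma_eq p z hz] at h
  have h2 : ((p:ℂ) + 1) = ((p + 1 : ℝ) : ℂ) := by push_cast; ring
  rw [h2, ← lowerGamma_eq (p+1) z hz] at h
  rw [← Complex.ofReal_cpow hz] at h
  exact_mod_cast h

lemma image_rpow_Ioo {α b : ℝ} (hα : 0 < α) (hb : 0 < b) :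
    (fun t : ℝ => t ^ α) '' (Set.Ioo 0 b) = Set.Ioo 0 (b ^ α) := by
  ext u
  constructor
  · rintro ⟨t, ⟨ht0, htb⟩, rfl⟩
    exact ⟨Real.rpow_pos_of_pos ht0 α, Real.rpow_lt_rpow ht0.le htb hα⟩
  · rintro ⟨hu0, hub⟩
    refine ⟨u ^ α⁻¹, ⟨Real.rpow_pos_of_pos hu0 _, ?_⟩, Real.rpow_inv_rpow hu0.le hα.ne'⟩
    calc u ^ α⁻¹ < (b ^ α) ^ α⁻¹ := Real.rpow_lt_rpow hu0.le hub (by positivity)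
    _ = b := Real.rpow_rpow_inv hb.le hα.ne'

lemma rpow_exp_integral {α β b : ℝ} (hα : 0 < α) (hb : 0 < b) :
    α * (∫ t in (0:ℝ)..b, t ^ β * Real.exp (-(t ^ α)))
      = lowerGamma ((β + 1) / α) (b ^ α) := by
  have hba : (0:ℝ) ≤ b ^ α := (Real.rpow_pos_of_pos hb α).le
  rw [lowerGamma, intervalIntegral.integral_of_le hba, integral_Ioc_eq_integral_Ioo,
    ← image_rpow_Ioo hα hb,
    integral_image_eq_integral_abs_deriv_smul measurableSet_Ioo
      (f' := fun t => α * t ^ (α - 1))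
      (fun x hx => (Real.hasDerivAt_rpow_const (Or.inl hx.1.ne')).hasDerivWithinAt)
      (fun x hx y hy hxy => by
        have := Real.rpow_left_injOn (x := α) hα.ne'
        exact this (le_of_lt hx.1) (le_of_lt hy.1) hxy)]
  rw [intervalIntegral.integral_of_le hb.le, integral_Ioc_eq_integral_Ioo,
    ← integral_const_mul]
  apply setIntegral_congr_fun measurableSet_Ioo
  intro t ht
  have ht0 : 0 < t := ht.1
  have h1 : |α * t ^ (α - 1)| = α * t ^ (α - 1) := by
    rw [abs_of_nonneg]; positivity
  simp only [smul_eq_mul]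
  rw [h1, ← Real.rpow_mul ht0.le]
  have h2 : α * ((β + 1) / α - 1) = β + 1 - α := by field_simp
  rw [h2]
  have h3 : t ^ (α - 1) * t ^ (β + 1 - α) = t ^ β := by
    rw [← Real.rpow_add ht0]; ring_nf
  rw [← h3]; ring

lemma betaFn_flip (d : ℕ) (τ : ℝ) :
    betaFn ((d:ℝ) + 1) (τ + 1) = ∫ u in (0:ℝ)..1, (1 - u) ^ d * u ^ τ := by
  rw [betaFn]
  have := intervalIntegral.integral_comp_sub_left
    (a := (0:ℝ)) (b := 1) (fun v => v ^ ((d:ℝ) + 1 - 1) * (1 - v) ^ (τ + 1 - 1)) 1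
  simp only [sub_zero, sub_self] at this
  rw [← this]
  apply intervalIntegral.integral_congr
  intro u hu
  rw [Set.uIcc_of_le (by norm_num)] at hu
  simp only [sub_sub_cancel]
  rw [show (d:ℝ) + 1 - 1 = (d:ℝ) by ring, show τ + 1 - 1 = τ by ring,
    Real.rpow_natCast]

lemma inner_beta (d : ℕ) (τ : ℝ) {t : ℝ} (ht : 0 < t) :
    (∫ s in (0:ℝ)..t, (t - s) ^ d * s ^ τ)
      = t ^ ((d:ℝ) + τ + 1) * betaFn ((d:ℝ) + 1) (τ + 1) := by
  have h := intervalIntegral.integral_comp_mul_left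
    (a := (0:ℝ)) (b := 1) (fun s => (t - s) ^ d * s ^ τ) ht.ne'
  simp only [mul_zero, mul_one] at h
  have h2 : (∫ x in (0:ℝ)..1, (t - t*x)^d * (t*x)^τ)
      = t ^ ((d:ℝ) + τ) * ∫ x in (0:ℝ)..1, (1 - x)^d * x^τ := by
    rw [← intervalIntegral.integral_const_mul]
    apply intervalIntegral.integral_congr
    intro x hx
    dsimp only
    rw [Set.uIcc_of_le (by norm_num)] at hx
    have hx0 : (0:ℝ) ≤ x := hx.1
    have e1 : t - t*x = t * (1-x) := by ring
    rw [e1, mul_pow, Real.mul_rpow ht.le hx0,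
      ← Real.rpow_natCast t d, Real.rpow_add ht]
    ring
  rw [h2] at h
  rw [← betaFn_flip] at h
  have := congrArg (fun y => t * y) h
  simp only [smul_eq_mul, ← mul_assoc, mul_inv_cancel₀ ht.ne', one_mul] at this
  rw [← this, show (d:ℝ) + τ + 1 = ((d:ℝ)+τ)+1 by ring, Real.rpow_add_one ht.ne']
  ring

/-- Key positivity estimate for the variance lower bound: for d ≥ 1, -1 < τ ≤ d-1, b > 0,
    ∫₀^b t^τ e^{-t^{d+τ+1}} dt - (2/B(d+1,τ+1)) ∫₀^b ∫₀^t (t-s)^d e^{-(s^{d+τ+1}+t^{d+τ+1})} t^τ s^τ ds dt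
    > γ((τ+1)/(d+τ+1), b^{d+τ+1}) · (1/(d+τ+1)) · (1 - 2(τ+1)/(d+τ+1)) ≥ 0. -/
theorem variance_positivity_estimate (d : ℕ) (hd : 1 ≤ d) (τ b : ℝ)
    (hτ : -1 < τ) (hτd : τ ≤ (d:ℝ) - 1) (hb : 0 < b) :
    ((∫ t in (0:ℝ)..b, t ^ τ * Real.exp (-(t ^ ((d:ℝ) + τ + 1))))
      - (2 / betaFn ((d:ℝ) + 1) (τ + 1))
          * ∫ t in (0:ℝ)..b, (∫ s in (0:ℝ)..t,
              (t - s) ^ d * Real.exp (-(s ^ ((d:ℝ) + τ + 1) + t ^ ((d:ℝ) + τ + 1)))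
                * t ^ τ * s ^ τ)
      > lowerGamma ((τ + 1) / ((d:ℝ) + τ + 1)) (b ^ ((d:ℝ) + τ + 1))
          * (1 / ((d:ℝ) + τ + 1)) * (1 - 2 * (τ + 1) / ((d:ℝ) + τ + 1)))
    ∧ 0 ≤ lowerGamma ((τ + 1) / ((d:ℝ) + τ + 1)) (b ^ ((d:ℝ) + τ + 1))
          * (1 / ((d:ℝ) + τ + 1)) * (1 - 2 * (τ + 1) / ((d:ℝ) + τ + 1)) := by
  have hd1 : (1:ℝ) ≤ (d:ℝ) := by exact_mod_cast hd
  set α : ℝ := (d:ℝ) + τ + 1 with hα_def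
  have hα1 : 1 < α := by simp only [hα_def]; linarith
  have hα0 : 0 < α := by linarith
  have hτ1 : 0 < τ + 1 := by linarith
  set p : ℝ := (τ + 1) / α with hp_def
  have hp0 : 0 < p := div_pos hτ1 hα0
  have h2p : 2 * (τ + 1) ≤ α := by simp only [hα_def]; linarith
  set z : ℝ := b ^ α with hz_def
  have hz : 0 < z := Real.rpow_pos_of_pos hb α
  set B : ℝ := betaFn ((d:ℝ) + 1) (τ + 1) with hB_def
  -- positivity of B
  have hBint : IntervalIntegrable (fun u : ℝ => (1 - u) ^ d * u ^ τ) volume 0 1 :=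
    (intervalIntegral.intervalIntegrable_rpow' hτ).continuousOn_mul
      (Continuous.continuousOn (by continuity))
  have hB : 0 < B := by
    rw [hB_def, betaFn_flip]
    apply intervalIntegral.intervalIntegral_pos_of_pos_on hBint _ one_pos
    intro x hx
    exact mul_pos (pow_pos (by linarith [hx.2]) d) (Real.rpow_pos_of_pos hx.1 τ)
  -- continuity of t ↦ t ^ α (α > 0)
  have hcont_rpow : ∀ c : ℝ, 0 ≤ c → Continuous fun t : ℝ => t ^ c := by
    intro c hc
    apply continuous_iff_continuousAt.2
    intro x
    exact Real.continuousAt_rpow_const x c (Or.inr hc)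
  -- the first integral
  have hT1 : (∫ t in (0:ℝ)..b, t ^ τ * Real.exp (-(t ^ α)))
      = 1 / α * lowerGamma p z := by
    have := rpow_exp_integral (β := τ) hα0 hb
    rw [hp_def, hz_def]
    field_simp
    linarith [this]
  -- nonnegativity of lowerGamma p z
  have hγ0 : 0 ≤ lowerGamma p z := by
    apply intervalIntegral.integral_nonneg hz.le
    intro u hu
    have := hu.1
    positivity
  -- gamma recurrence
  have hrec : lowerGamma (p + 1) z < p * lowerGamma p z := by
    rw [lowerGamma_add_one hp0 hz.le]
    have : 0 < Real.exp (-z) * z ^ p := by positivity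
    linarith
  -- the inner integrand and bounds
  set inner : ℝ → ℝ := fun t => ∫ s in (0:ℝ)..t,
      (t - s) ^ d * Real.exp (-(s ^ α + t ^ α)) * t ^ τ * s ^ τ with hinner_def
  have hατ : 0 < α + τ := by simp only [hα_def]; linarith
  set h : ℝ → ℝ := fun t => B * (t ^ (α + τ) * Real.exp (-(t ^ α))) with hh_def
  have hh_cont : Continuous h := by
    apply continuous_const.mul
    exact ((hcont_rpow _ hατ.le).mul ((hcont_rpow _ hα0.le).neg.rexp))
  -- inner t is nonneg
  have hinner_nonneg : ∀ t : ℝ, 0 ≤ t → 0 ≤ inner t := by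
    intro t ht
    apply intervalIntegral.integral_nonneg ht
    intro s hs
    have hs0 := hs.1
    have hts : 0 ≤ t - s := by linarith [hs.2]
    positivity
  -- pointwise bound inner t ≤ h t on Icc 0 b
  have hbound : ∀ t ∈ Set.Icc (0:ℝ) b, inner t ≤ h t := by
    intro t ht
    rcases eq_or_lt_of_le ht.1 with rfl | ht0
    · simp only [hinner_def, intervalIntegral.integral_same, hh_def]
      rw [Real.zero_rpow hατ.ne']
      simp
    · have hIJ : IntervalIntegrable
          (fun s => (t - s) ^ d * Real.exp (-(s ^ α)) * s ^ τ) volume 0 t := by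
        have hc : Continuous fun s : ℝ => (t - s) ^ d * Real.exp (-(s ^ α)) :=
          ((continuous_const.sub continuous_id).pow d).mul ((hcont_rpow _ hα0.le).neg.rexp)
        have := (intervalIntegral.intervalIntegrable_rpow' (a := 0) (b := t)
          hτ).continuousOn_mul (g := fun s : ℝ => (t - s) ^ d * Real.exp (-(s ^ α)))
          hc.continuousOn
        simpa [mul_assoc] using this
      have hIK : IntervalIntegrable (fun s => (t - s) ^ d * s ^ τ) volume 0 t :=
        (intervalIntegral.intervalIntegrable_rpow' hτ).continuousOn_mul
          (Continuous.continuousOn ((continuous_const.sub continuous_id).pow d))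
      have hJK : (∫ s in (0:ℝ)..t, (t - s) ^ d * Real.exp (-(s ^ α)) * s ^ τ)
          ≤ ∫ s in (0:ℝ)..t, (t - s) ^ d * s ^ τ := by
        apply intervalIntegral.integral_mono_on ht0.le hIJ hIK
        intro s hs
        have hs0 := hs.1
        have hts : 0 ≤ t - s := by linarith [hs.2]
        have he : Real.exp (-(s ^ α)) ≤ 1 := by
          rw [Real.exp_le_one_iff, neg_nonpos]
          positivity
        have h1 : (t - s) ^ d * Real.exp (-(s ^ α)) ≤ (t - s) ^ d * 1 :=
          mul_le_mul_of_nonneg_left he (by positivity)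
        rw [mul_one] at h1
        exact mul_le_mul_of_nonneg_right h1 (by positivity)
      have hfact : inner t = (Real.exp (-(t ^ α)) * t ^ τ)
          * ∫ s in (0:ℝ)..t, (t - s) ^ d * Real.exp (-(s ^ α)) * s ^ τ := by
        rw [hinner_def, ← intervalIntegral.integral_const_mul]
        apply intervalIntegral.integral_congr
        intro s _
        dsimp only
        rw [neg_add, Real.exp_add]
        ring
      rw [hfact, hh_def]
      have hK : (∫ s in (0:ℝ)..t, (t - s) ^ d * s ^ τ) = t ^ α * B := by
        rw [inner_beta d τ ht0, hα_def, hB_def]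
      calc (Real.exp (-(t ^ α)) * t ^ τ)
            * ∫ s in (0:ℝ)..t, (t - s) ^ d * Real.exp (-(s ^ α)) * s ^ τ
          ≤ (Real.exp (-(t ^ α)) * t ^ τ) * ∫ s in (0:ℝ)..t, (t - s) ^ d * s ^ τ := by
            apply mul_le_mul_of_nonneg_left hJK
            positivity
        _ = B * (t ^ (α + τ) * Real.exp (-(t ^ α))) := by
            rw [hK, Real.rpow_add ht0 α τ]
            ring
  -- measurability and integrability of inner on [0,b]
  have hinner_int : IntervalIntegrable inner volume 0 b := by
    rw [intervalIntegrable_iff_integrableOn_Ioc_of_le hb.le]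
    have hG : Measurable fun q : ℝ × ℝ =>
        (if q.2 ∈ Set.Ioc 0 q.1 then
          (q.1 - q.2) ^ d * Real.exp (-(q.2 ^ α + q.1 ^ α)) * q.1 ^ τ * q.2 ^ τ else 0) := by
      apply Measurable.ite
      · have : {q : ℝ × ℝ | q.2 ∈ Set.Ioc 0 q.1}
            = {q : ℝ × ℝ | (0:ℝ) < q.2} ∩ {q : ℝ × ℝ | q.2 ≤ q.1} := by
          ext q; simp [Set.mem_Ioc, and_comm]
        rw [this]
        exact (measurableSet_lt measurable_const measurable_snd).inter
          (measurableSet_le measurable_snd measurable_fst)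
      · fun_prop
      · exact measurable_const
    have hSM : StronglyMeasurable fun t : ℝ => ∫ s : ℝ,
        (if s ∈ Set.Ioc 0 t then
          (t - s) ^ d * Real.exp (-(s ^ α + t ^ α)) * t ^ τ * s ^ τ else 0) :=
      hG.stronglyMeasurable.integral_prod_right'
    have hEq : ∀ t ∈ Set.Ioc (0:ℝ) b, inner t = ∫ s : ℝ,
        (if s ∈ Set.Ioc 0 t then
          (t - s) ^ d * Real.exp (-(s ^ α + t ^ α)) * t ^ τ * s ^ τ else 0) := by
      intro t ht
      rw [hinner_def]
      dsimp only
      rw [intervalIntegral.integral_of_le ht.1.le, ← integral_indicator measurableSet_Ioc]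
      congr 1
      ext s
      rw [Set.indicator_apply]
    apply Integrable.mono' (g := h)
      (hh_cont.integrableOn_Ioc)
    · apply hSM.aestronglyMeasurable.congr
      rw [Filter.EventuallyEq, ae_restrict_iff' measurableSet_Ioc]
      filter_upwards with t ht
      exact (hEq t ht).symm
    · rw [ae_restrict_iff' measurableSet_Ioc]
      filter_upwards with t ht
      rw [Real.norm_eq_abs, abs_of_nonneg (hinner_nonneg t ht.1.le)]
      exact hbound t ⟨ht.1.le, ht.2⟩
  -- bound for the double integral
  have hH : (∫ t in (0:ℝ)..b, h t) = B * (1 / α * lowerGamma (p + 1) z) := by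
    rw [hh_def]
    simp only
    rw [intervalIntegral.integral_const_mul]
    congr 1
    have := rpow_exp_integral (β := α + τ) hα0 hb
    have he : (α + τ + 1) / α = p + 1 := by
      rw [hp_def]; field_simp; ring
    rw [he] at this
    rw [hz_def]
    field_simp
    linarith [this]
  have hI : (∫ t in (0:ℝ)..b, inner t) ≤ B * (1 / α * lowerGamma (p + 1) z) := by
    rw [← hH]
    apply intervalIntegral.integral_mono_on hb.le hinner_int
      (hh_cont.intervalIntegrable 0 b) hbound
  -- final assembly
  constructor
  · rw [hT1]
    have key : (2 / B) * (∫ t in (0:ℝ)..b, inner t) < 2 / α * (p * lowerGamma p z) := by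
      calc (2 / B) * (∫ t in (0:ℝ)..b, inner t)
          ≤ (2 / B) * (B * (1 / α * lowerGamma (p + 1) z)) := by
            apply mul_le_mul_of_nonneg_left hI (by positivity)
        _ = 2 / α * lowerGamma (p + 1) z := by
            field_simp
        _ < 2 / α * (p * lowerGamma p z) := by
            apply mul_lt_mul_of_pos_left hrec (by positivity)
    have hrw : lowerGamma p z * (1 / α) * (1 - 2 * (τ + 1) / α)
        = 1 / α * lowerGamma p z - 2 / α * (p * lowerGamma p z) := by
      rw [hp_def]; field_simp
    rw [hrw]
    linarith [key]
  · apply mul_nonneg (mul_nonneg hγ0 (by positivity))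
    rw [sub_nonneg]
    rw [div_le_one hα0]
    linarith
end
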